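/- Let R be a DVR with maximal ideal p = πR, B a quaternion algebra over Frac(R), and O ⊆ B an R-order that is a local ring and is not basic (contains no integrally closed quadratic R-subalgebra). Then every α ∈ rad O satisfies π² ∣ nrd(α) and α² ∈ p·(rad O). -/

import Mathlib

/-!
Let `X² - tX + n` be the reduced characteristic polynomial of `α ∈ rad O`. As `α` is integral
over the integrally closed ring `R`, `t` and `n` lie in `R`, and `n = tα - α²` lies in
`rad O ∩ R = p`. If `π ∤ t`, or if `π ∣ t` but `π² ∤ n` (the Eisenstein case), then an element
`(a + bα)/π` with integral trace and norm has `π ∣ a` and `π ∣ b`; clearing denominators one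
power of `π` at a time, `R[α] = R + Rα` is integrally closed in `F[α]`, so `O` would be basic.
Hence `π ∣ t` and `π² ∣ n`, and `α² = tα - n ∈ π · rad O` because `n/π` is central in the local
ring `O` with square in `rad O`. A scalar `α = r` has `π ∣ r` and relation `(α - r)² = 0`.
-/

/-- `O` is an `R`-order in the quaternion algebra `B`: a subring that is a full `R`-lattice. -/
def IsQuaternionOrder (R F B : Type*) [CommRing R] [Field F] [Algebra R F]
    [Ring B] [Algebra F B] [Algebra R B] [IsScalarTower R F B]
    (O : Subalgebra R B) : Prop :=
  Module.Finite R O ∧ Submodule.span F (O : Set B) = ⊤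

/-- `O` is basic: it contains a commutative quadratic `R`-subalgebra `S` (free of rank `2`
as an `R`-module) that is integrally closed in its total quotient ring `F·S`. -/
def IsBasicOrder (R F B : Type*) [CommRing R] [Field F] [Algebra R F]
    [Ring B] [Algebra F B] [Algebra R B] [IsScalarTower R F B]
    (O : Subalgebra R B) : Prop :=
  ∃ S : Subalgebra R B, S ≤ O ∧ (∀ x ∈ S, ∀ y ∈ S, x * y = y * x) ∧
    Module.Free R S ∧ Module.finrank R S = 2 ∧
    ∀ β ∈ Submodule.span F (S : Set B), IsIntegral R β → β ∈ S

open Polynomial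

namespace IsLocalRing

variable {A : Type*} [Ring A] [IsLocalRing A]

theorem mem_jacobson_bot_of_commute_of_not_isUnit {c : A} (hc : ∀ y, Commute c y)
    (hu : ¬IsUnit c) : c ∈ Ideal.jacobson (⊥ : Ideal A) := by
  refine Ideal.mem_jacobson_iff.mpr fun y => ?_
  have hunit : IsUnit (y * c + 1) :=
    (IsLocalRing.isUnit_or_isUnit_of_add_one (a := y * c + 1) (b := -y * c)
      (by noncomm_ring)).resolve_right fun h => hu ((hc (-y)).symm.isUnit_mul_iff.mp h).2
  obtain ⟨u, hu⟩ := hunit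
  refine ⟨↑u⁻¹, (Submodule.mem_bot _).mpr ?_⟩
  calc ↑u⁻¹ * y * c + ↑u⁻¹ - 1 = ↑u⁻¹ * (y * c + 1) - 1 := by noncomm_ring
    _ = 0 := by rw [← hu, Units.inv_mul, sub_self]

theorem mem_jacobson_bot_of_commute_of_sq_mem {c : A} (hc : ∀ y, Commute c y)
    (h : c ^ 2 ∈ Ideal.jacobson (⊥ : Ideal A)) : c ∈ Ideal.jacobson (⊥ : Ideal A) :=
  mem_jacobson_bot_of_commute_of_not_isUnit hc fun hu =>
    bot_ne_top (Ideal.jacobson_eq_top_iff.mp (Ideal.eq_top_of_isUnit_mem _ h (hu.pow 2)))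

end IsLocalRing

theorem IsDiscreteValuationRing.dvd_of_algebraMap_mem_jacobson_bot {R A : Type*} [CommRing R]
    [IsDomain R] [IsDiscreteValuationRing R] [Ring A] [Nontrivial A] [Algebra R A] {π r : R}
    (hπ : Irreducible π) (hr : algebraMap R A r ∈ Ideal.jacobson (⊥ : Ideal A)) : π ∣ r := by
  by_contra hπr
  have hunit : IsUnit r := by
    by_contra hnu
    have hr_max : r ∈ IsLocalRing.maximalIdeal R := hnu
    rw [(irreducible_iff_uniformizer π).mp hπ] at hr_max
    exact hπr (Ideal.mem_span_singleton.mp hr_max)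
  exact bot_ne_top (Ideal.jacobson_eq_top_iff.mp
    (Ideal.eq_top_of_isUnit_mem _ hr (hunit.map (algebraMap R A))))

section IntegrallyClosed

variable {R F B : Type*} [CommRing R] [IsIntegrallyClosed R] [Field F]
  [Algebra R F] [IsFractionRing R F] [Ring B] [Algebra F B] [Algebra R B]
  [IsScalarTower R F B]

theorem exists_algebraMap_eq_of_isIntegral_algebraMap [Nontrivial B] {c : F}
    (h : IsIntegral R (algebraMap F B c)) : ∃ r : R, algebraMap R F r = c :=
  IsIntegrallyClosed.isIntegral_iff.mp <|
    (isIntegral_algHom_iff (IsScalarTower.toAlgHom R F B) (algebraMap F B).injective).mp h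

theorem exists_map_eq_minpoly [IsDomain R] {β : B} (h : IsIntegral R β) :
    ∃ g : R[X], g.map (algebraMap R F) = minpoly F β := by
  have hF : IsIntegral F β := h.tower_top
  obtain ⟨f, hf_monic, hf⟩ := h
  have hdvd : minpoly F β ∣ f.map (algebraMap R F) :=
    minpoly.dvd F β (by rwa [aeval_map_algebraMap, aeval_def])
  obtain ⟨g, hg⟩ := IsIntegrallyClosed.eq_map_mul_C_of_dvd F hf_monic hdvd
  rw [(minpoly.monic hF).leadingCoeff, map_one, mul_one] at hg
  exact ⟨g, hg⟩

theorem exists_algebraMap_eq_of_quadratic [IsDomain R] [Nontrivial B] {β : B}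
    (hint : IsIntegral R β) (hβ : β ∉ Set.range (algebraMap F B)) {u v : F}
    (hq : β ^ 2 - algebraMap F B u * β + algebraMap F B v = 0) :
    (∃ t : R, algebraMap R F t = u) ∧ ∃ n : R, algebraMap R F n = v := by
  set p : F[X] := X ^ 2 - C u * X + C v
  have hp_monic : p.Monic := by unfold p; monicity!
  have hp_degree : p.degree = 2 := by unfold p; compute_degree!
  have hp : aeval β p = 0 := by simpa [p] using hq
  have hint_F : IsIntegral F β := ⟨p, hp_monic, hp⟩
  have hmin : p = minpoly F β := by
    refine minpoly.unique_of_degree_le_degree_minpoly F β hp_monic hp ?_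
    rw [hp_degree, degree_eq_natDegree (minpoly.ne_zero hint_F)]
    exact_mod_cast (minpoly.two_le_natDegree_iff hint_F).mpr hβ
  obtain ⟨g, hg⟩ := exists_map_eq_minpoly (F := F) hint
  rw [← hmin] at hg
  refine ⟨⟨-g.coeff 1, ?_⟩, ⟨g.coeff 0, ?_⟩⟩
  · rw [map_neg, neg_eq_iff_eq_neg]
    simpa [p, coeff_X, coeff_C] using congrArg (coeff · 1) hg
  · simpa [p, coeff_X, coeff_C] using congrArg (coeff · 0) hg

end IntegrallyClosed

section QuadraticElement

variable {K A : Type*} [CommRing K] [Ring A] [Algebra K A] {β : A} {t n : K}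

theorem aeval_quadratic_eq_zero (hβ : β ^ 2 - algebraMap K A t * β + algebraMap K A n = 0) :
    aeval β (X ^ 2 - C t * X + C n) = 0 := by
  simpa using hβ

theorem Algebra.toSubmodule_adjoin_eq_span_of_quadratic
    (hβ : β ^ 2 - algebraMap K A t * β + algebraMap K A n = 0) :
    Subalgebra.toSubmodule (Algebra.adjoin K {β}) = Submodule.span K {1, β} := by
  refine le_antisymm (fun x hx => ?_) ?_
  · rw [Subalgebra.mem_toSubmodule, Algebra.adjoin_singleton_eq_range_aeval] at hx
    obtain ⟨f, rfl⟩ := hx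
    have hmonic : (X ^ 2 - C t * X + C n).Monic := by nontriviality K; monicity!
    have hdeg : (f %ₘ (X ^ 2 - C t * X + C n)).degree ≤ 1 := by
      nontriviality K
      exact Order.le_of_lt_succ
        ((degree_modByMonic_lt f hmonic).trans_le (by compute_degree; rfl))
    rw [AlgHom.toRingHom_eq_coe, RingHom.coe_coe,
      ← aeval_modByMonic_eq_self_of_root (aeval_quadratic_eq_zero hβ),
      eq_X_add_C_of_degree_le_one hdeg]
    exact Submodule.mem_span_pair.mpr ⟨_, _, by simp [Algebra.smul_def]; exact add_comm _ _⟩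
  · rw [Submodule.span_le]
    rintro _ (rfl | rfl)
    exacts [(Algebra.adjoin K {β}).one_mem, Algebra.self_mem_adjoin_singleton K _]

theorem smul_one_add_smul_sq_sub_add_eq_zero
    (hβ : β ^ 2 - algebraMap K A t * β + algebraMap K A n = 0) (a b : K) :
    (a • 1 + b • β) ^ 2 - algebraMap K A (2 * a + b * t) * (a • 1 + b • β)
      + algebraMap K A (a ^ 2 + a * b * t + b ^ 2 * n) = 0 := by
  have key : (C a + C b * X) ^ 2 - C (2 * a + b * t) * (C a + C b * X)
      + C (a ^ 2 + a * b * t + b ^ 2 * n) = C (b ^ 2) * (X ^ 2 - C t * X + C n) := by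
    simp only [map_add, map_mul, map_pow, map_ofNat]
    ring
  have := congrArg (aeval β) key
  rw [map_mul, aeval_quadratic_eq_zero hβ, mul_zero] at this
  rw [← this]
  simp [Algebra.smul_def]

end QuadraticElement

/-- For `β` a root of `X² - tX + n`, `a + bβ` has trace `2a + bt` and norm `a² + abt + b²n`;
the condition says that `(a + bβ)/π` is integral only when `π` divides `a` and `b`. -/
def QuadraticIsMaximalAt {R : Type*} [CommRing R] (π t n : R) : Prop :=
  ∀ a b : R, π ^ 2 ∣ a ^ 2 + a * b * t + b ^ 2 * n → π ∣ 2 * a + b * t → π ∣ a ∧ π ∣ b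

namespace QuadraticIsMaximalAt

section Prime

variable {R : Type*} [CommRing R] {π t n : R}

theorem of_not_dvd (hπ : Prime π) (hn : π ∣ n) (ht : ¬π ∣ t) : QuadraticIsMaximalAt π t n := by
  intro a b hnorm htrace
  have hnorm' : π ∣ a * (a + b * t) := by
    have : a * (a + b * t) = (a ^ 2 + a * b * t + b ^ 2 * n) - b ^ 2 * n := by ring
    rw [this]
    exact dvd_sub ((dvd_pow_self π two_ne_zero).trans hnorm) (hn.mul_left _)
  have ha : π ∣ a := by
    refine (hπ.dvd_mul.mp hnorm').elim id fun h => ?_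
    have : a = (2 * a + b * t) - (a + b * t) := by ring
    rw [this]
    exact dvd_sub htrace h
  have hbt : π ∣ b * t := by
    have : b * t = (2 * a + b * t) - 2 * a := by ring
    rw [this]
    exact dvd_sub htrace (ha.mul_left 2)
  exact ⟨ha, (hπ.dvd_mul.mp hbt).resolve_right ht⟩

theorem of_eisenstein [IsDomain R] (hπ : Prime π) (hn : ¬π ∣ n) :
    QuadraticIsMaximalAt π (π * t) (π * n) := by
  intro a b hnorm _
  have ha : π ∣ a := by
    refine hπ.dvd_of_dvd_pow (n := 2) ?_
    have : a ^ 2 = (a ^ 2 + a * b * (π * t) + b ^ 2 * (π * n))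
        - π * (a * b * t + b ^ 2 * n) := by
      ring
    rw [this]
    exact dvd_sub ((dvd_pow_self π two_ne_zero).trans hnorm) (dvd_mul_right _ _)
  obtain ⟨a₁, rfl⟩ := ha
  have hb : π * π ∣ π * (b ^ 2 * n) := by
    have : π * (b ^ 2 * n) = ((π * a₁) ^ 2 + π * a₁ * b * (π * t) + b ^ 2 * (π * n))
        - π ^ 2 * (a₁ ^ 2 + a₁ * b * t) := by
      ring
    rw [this, ← sq]
    exact dvd_sub hnorm (dvd_mul_right _ _)
  have hb' := (mul_dvd_mul_iff_left hπ.ne_zero).mp hb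
  exact ⟨dvd_mul_right _ _, hπ.dvd_of_dvd_pow ((hπ.dvd_mul.mp hb').resolve_right hn)⟩

end Prime

section Descent

open IsLocalization

variable {R F : Type*} [CommRing R] [Field F] [Algebra R F] [IsFractionRing R F]
  {π t n : R}

theorem isInteger_pow_smul_of_pow_succ_smul (hmax : QuadraticIsMaximalAt π t n) (hπ : π ≠ 0)
    {a b : F} (htr : IsInteger R (2 * a + b * algebraMap R F t))
    (hnm : IsInteger R (a ^ 2 + a * b * algebraMap R F t + b ^ 2 * algebraMap R F n)) {k : ℕ}
    (ha : IsInteger R (π ^ (k + 1) • a)) (hb : IsInteger R (π ^ (k + 1) • b)) :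
    IsInteger R (π ^ k • a) ∧ IsInteger R (π ^ k • b) := by
  have hinj := IsFractionRing.injective R F
  obtain ⟨a', ha'⟩ := ha
  obtain ⟨b', hb'⟩ := hb
  obtain ⟨u, hu⟩ := htr
  obtain ⟨v, hv⟩ := hnm
  rw [Algebra.smul_def] at ha' hb'
  have hnorm : a' ^ 2 + a' * b' * t + b' ^ 2 * n = π ^ 2 * (π ^ (2 * k) * v) :=
    hinj (by simp only [map_add, map_mul, map_pow, ha', hb', hv]; ring)
  have htrace : 2 * a' + b' * t = π * (π ^ k * u) :=
    hinj (by simp only [map_add, map_mul, map_pow, map_ofNat, ha', hb', hu]; ring)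
  obtain ⟨⟨a₁, rfl⟩, ⟨b₁, rfl⟩⟩ := hmax a' b' ⟨_, hnorm⟩ ⟨_, htrace⟩
  have hπF : algebraMap R F π ≠ 0 := (map_ne_zero_iff _ hinj).mpr hπ
  refine ⟨⟨a₁, mul_left_cancel₀ hπF ?_⟩, ⟨b₁, mul_left_cancel₀ hπF ?_⟩⟩
  · rw [← map_mul, ha', Algebra.smul_def, pow_succ', map_mul, mul_assoc]
  · rw [← map_mul, hb', Algebra.smul_def, pow_succ', map_mul, mul_assoc]

theorem isInteger [IsDomain R] [IsDiscreteValuationRing R] (hmax : QuadraticIsMaximalAt π t n)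
    (hπ : Irreducible π) {a b : F} (htr : IsInteger R (2 * a + b * algebraMap R F t))
    (hnm : IsInteger R (a ^ 2 + a * b * algebraMap R F t + b ^ 2 * algebraMap R F n)) :
    IsInteger R a ∧ IsInteger R b := by
  have descent : ∀ k : ℕ, IsInteger R (π ^ k • a) ∧ IsInteger R (π ^ k • b) →
      IsInteger R a ∧ IsInteger R b := by
    intro k
    induction k with
    | zero => simp
    | succ k ih =>
      exact fun h => ih (hmax.isInteger_pow_smul_of_pow_succ_smul hπ.ne_zero htr hnm h.1 h.2)
  obtain ⟨s, hs⟩ := exist_integer_multiples_of_finite (nonZeroDivisors R) ![a, b]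
  obtain ⟨k, u, hsu⟩ :=
    IsDiscreteValuationRing.eq_unit_mul_pow_irreducible (nonZeroDivisors.ne_zero s.2) hπ
  have hpow : ∀ x : F, IsInteger R ((s : R) • x) → IsInteger R (π ^ k • x) := fun x hx => by
    simpa [smul_smul, hsu, ← mul_assoc] using isInteger_smul (a := ↑u⁻¹) hx
  exact descent k ⟨hpow a (hs 0), hpow b (hs 1)⟩

end Descent

end QuadraticIsMaximalAt

section QuaternionOrder

variable {R F B : Type*} [CommRing R] [Field F] [Algebra R F] [Ring B] [Algebra F B]
  [Algebra R B] [IsScalarTower R F B]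

theorem linearIndependent_pair_one_of_notMem_range [IsDomain R] [IsFractionRing R F]
    [Nontrivial B] {β : B} (hβ : β ∉ Set.range (algebraMap F B)) :
    LinearIndependent R ![(1 : B), β] := by
  refine .restrict_scalars' (K := F) R ((LinearIndependent.pair_iff' one_ne_zero).mpr ?_)
  intro a ha
  exact hβ ⟨a, by rw [Algebra.algebraMap_eq_smul_one, ha]⟩

theorem mem_adjoin_of_isIntegral_of_quadraticIsMaximalAt [IsDomain R]
    [IsDiscreteValuationRing R] [IsFractionRing R F] [Nontrivial B] {π : R} (hπ : Irreducible π)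
    {β : B} {t n : R} (hrel : β ^ 2 - algebraMap R B t * β + algebraMap R B n = 0)
    (hmax : QuadraticIsMaximalAt π t n) {x : B} (hx : x ∈ Submodule.span F {1, β})
    (hint : IsIntegral R x) : x ∈ Algebra.adjoin R {β} := by
  obtain ⟨a, b, rfl⟩ := Submodule.mem_span_pair.mp hx
  rw [← Subalgebra.mem_toSubmodule, Algebra.toSubmodule_adjoin_eq_span_of_quadratic hrel]
  by_cases hscalar : a • 1 + b • β ∈ Set.range (algebraMap F B)
  · obtain ⟨c, hc⟩ := hscalar
    obtain ⟨r, rfl⟩ := exists_algebraMap_eq_of_isIntegral_algebraMap (hc ▸ hint)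
    rw [← hc, ← IsScalarTower.algebraMap_apply, Algebra.algebraMap_eq_smul_one]
    exact Submodule.smul_mem _ _ (Submodule.subset_span (Set.mem_insert _ _))
  · have hrelF : β ^ 2 - algebraMap F B (algebraMap R F t) * β
        + algebraMap F B (algebraMap R F n) = 0 := by
      rwa [← IsScalarTower.algebraMap_apply, ← IsScalarTower.algebraMap_apply]
    obtain ⟨⟨u, hu⟩, ⟨v, hv⟩⟩ := exists_algebraMap_eq_of_quadratic hint hscalar
      (smul_one_add_smul_sq_sub_add_eq_zero hrelF a b)
    obtain ⟨⟨a', rfl⟩, ⟨b', rfl⟩⟩ := hmax.isInteger hπ ⟨u, hu⟩ ⟨v, hv⟩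
    exact Submodule.mem_span_pair.mpr ⟨a', b', by simp only [algebraMap_smul]⟩

theorem isBasicOrder_of_quadraticIsMaximalAt [IsDomain R] [IsDiscreteValuationRing R]
    [IsFractionRing R F] [Nontrivial B] {π : R} (hπ : Irreducible π) {O : Subalgebra R B}
    {β : B} (hβO : β ∈ O) (hβ : β ∉ Set.range (algebraMap F B)) {t n : R}
    (hrel : β ^ 2 - algebraMap R B t * β + algebraMap R B n = 0)
    (hmax : QuadraticIsMaximalAt π t n) : IsBasicOrder R F B O := by
  have hli : LinearIndependent R ![(1 : B), β] := linearIndependent_pair_one_of_notMem_range hβ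
  have hspan := Algebra.toSubmodule_adjoin_eq_span_of_quadratic hrel
  have hspan' : Subalgebra.toSubmodule (Algebra.adjoin R {β}) =
      Submodule.span R (Set.range ![1, β]) := by
    rw [hspan, Matrix.range_cons, Matrix.range_cons, Matrix.range_empty, Set.union_empty,
      Set.singleton_union]
  refine ⟨Algebra.adjoin R {β}, Algebra.adjoin_le (Set.singleton_subset_iff.mpr hβO),
    fun x hx y hy => ?_, ?_, ?_, fun x hx hint => ?_⟩
  · exact (Algebra.commute_of_mem_adjoin_singleton_of_commute hy
      (Algebra.commute_of_mem_adjoin_self hx).symm).eq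
  · have : Module.Free R (Subalgebra.toSubmodule (Algebra.adjoin R {β})) :=
      hspan' ▸ Module.Free.of_basis (Module.Basis.span hli)
    exact this
  · rw [← Subalgebra.finrank_toSubmodule, hspan', finrank_span_eq_card hli, Fintype.card_fin]
  · rw [← Subalgebra.coe_toSubmodule, hspan, Submodule.span_span_of_tower] at hx
    exact mem_adjoin_of_isIntegral_of_quadraticIsMaximalAt hπ hrel hmax hx hint

theorem algebraMap_mem_jacobson_of_quadratic {O : Subalgebra R B} {α : O}
    (hα : α ∈ Ideal.jacobson (⊥ : Ideal O)) {t n : R}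
    (hrel : (α : B) ^ 2 - algebraMap R B t * α + algebraMap R B n = 0) :
    algebraMap R O n ∈ Ideal.jacobson (⊥ : Ideal O) := by
  have hn : algebraMap R O n = algebraMap R O t * α - α * α := by
    apply Subtype.ext
    simp only [Subalgebra.coe_sub, Subalgebra.coe_mul, Subalgebra.coe_algebraMap]
    linear_combination (norm := noncomm_ring) hrel
  rw [hn]
  exact sub_mem (Ideal.mul_mem_left _ _ hα) (Ideal.mul_mem_left _ _ hα)

theorem sq_mem_span_smul_jacobson {π : R} {O : Subalgebra R B} [IsLocalRing O] {α : O}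
    (hα : α ∈ Ideal.jacobson (⊥ : Ideal O)) {t₁ s : R}
    (hrel : (α : B) ^ 2 - algebraMap R B (π * t₁) * α + algebraMap R B (π ^ 2 * s) = 0) :
    (α : B) ^ 2 ∈ (Ideal.span {π} : Ideal R) •
      ((Ideal.jacobson (⊥ : Ideal O)).restrictScalars R).map (Subalgebra.val O).toLinearMap := by
  have hn := algebraMap_mem_jacobson_of_quadratic hα hrel
  have hπs : algebraMap R O (π * s) ∈ Ideal.jacobson (⊥ : Ideal O) := by
    refine IsLocalRing.mem_jacobson_bot_of_commute_of_sq_mem (Algebra.commutes _) ?_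
    rw [← map_pow, show (π * s) ^ 2 = s * (π ^ 2 * s) by ring, map_mul]
    exact Ideal.mul_mem_left _ _ hn
  have hsq : (α : B) ^ 2 = π • ((algebraMap R O t₁ * α : O) : B)
      - π • ((algebraMap R O (π * s) : O) : B) := by
    simp only [Subalgebra.coe_mul, Subalgebra.coe_algebraMap, Algebra.smul_def, map_mul,
      map_pow] at hrel ⊢
    linear_combination (norm := noncomm_ring) hrel
  have hπ : π ∈ (Ideal.span {π} : Ideal R) := Ideal.mem_span_singleton_self π
  have hmem : ∀ x ∈ Ideal.jacobson (⊥ : Ideal O), π • (x : B) ∈ (Ideal.span {π} : Ideal R) •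
      ((Ideal.jacobson (⊥ : Ideal O)).restrictScalars R).map (Subalgebra.val O).toLinearMap :=
    fun x hx => Submodule.smul_mem_smul hπ (Submodule.mem_map_of_mem hx)
  rw [hsq]
  exact sub_mem (hmem _ (Ideal.mul_mem_left _ _ hα)) (hmem _ hπs)

theorem nrd_algebraMap [Nontrivial B] {trd : B →ₗ[F] F} {nrd : B → F}
    (hchar : ∀ α : B, α ^ 2 - algebraMap F B (trd α) * α + algebraMap F B (nrd α) = 0)
    (htrd1 : trd 1 = 2) (c : F) : nrd (algebraMap F B c) = c ^ 2 := by
  have htrd : trd (algebraMap F B c) = 2 * c := by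
    rw [Algebra.algebraMap_eq_smul_one, map_smul, htrd1, smul_eq_mul, mul_comm]
  have h := hchar (algebraMap F B c)
  rw [htrd, ← map_pow, ← map_mul, ← map_sub, ← map_add,
    map_eq_zero_iff _ (algebraMap F B).injective] at h
  linear_combination h

theorem exists_relation_of_mem_jacobson_of_mem_range [IsDomain R] [IsDiscreteValuationRing R]
    [IsFractionRing R F] [Nontrivial B] {π : R} (hπ : Irreducible π) {nrd : B → F}
    (hnrd : ∀ c : F, nrd (algebraMap F B c) = c ^ 2) {O : Subalgebra R B} {α : O}
    (hα : α ∈ Ideal.jacobson (⊥ : Ideal O)) (hint : IsIntegral R (α : B))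
    (hscalar : (α : B) ∈ Set.range (algebraMap F B)) :
    ∃ t₁ s : R, nrd α = algebraMap R F (π ^ 2 * s) ∧
      (α : B) ^ 2 - algebraMap R B (π * t₁) * α + algebraMap R B (π ^ 2 * s) = 0 := by
  obtain ⟨c, hc⟩ := hscalar
  obtain ⟨r, rfl⟩ := exists_algebraMap_eq_of_isIntegral_algebraMap (hc ▸ hint)
  rw [← IsScalarTower.algebraMap_apply] at hc
  have hαr : α = algebraMap R O r := Subtype.ext hc.symm
  obtain ⟨r₁, rfl⟩ := IsDiscreteValuationRing.dvd_of_algebraMap_mem_jacobson_bot hπ (hαr ▸ hα)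
  refine ⟨2 * r₁, r₁ ^ 2, ?_, ?_⟩
  · rw [← hc, IsScalarTower.algebraMap_apply R F B, hnrd, ← map_pow]
    ring_nf
  · rw [← hc, ← map_pow, ← map_mul, ← map_sub, ← map_add]
    ring_nf
    exact map_zero _

theorem dvd_and_sq_dvd_of_not_isBasicOrder [IsDomain R] [IsDiscreteValuationRing R]
    [IsFractionRing R F] [Nontrivial B] {π : R} (hπ : Irreducible π) {O : Subalgebra R B}
    (hnotbasic : ¬IsBasicOrder R F B O) {α : O} (hα : α ∈ Ideal.jacobson (⊥ : Ideal O))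
    (hscalar : (α : B) ∉ Set.range (algebraMap F B)) {t n : R}
    (hrel : (α : B) ^ 2 - algebraMap R B t * α + algebraMap R B n = 0) :
    π ∣ t ∧ π ^ 2 ∣ n := by
  have hn : π ∣ n := IsDiscreteValuationRing.dvd_of_algebraMap_mem_jacobson_bot hπ
    (algebraMap_mem_jacobson_of_quadratic hα hrel)
  have ht : π ∣ t := by_contra fun ht => hnotbasic <|
    isBasicOrder_of_quadraticIsMaximalAt hπ α.2 hscalar hrel (.of_not_dvd hπ.prime hn ht)
  obtain ⟨t₁, rfl⟩ := ht
  obtain ⟨n₁, rfl⟩ := hn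
  have hn₁ : π ∣ n₁ := by_contra fun hn₁ => hnotbasic <|
    isBasicOrder_of_quadraticIsMaximalAt hπ α.2 hscalar hrel (.of_eisenstein hπ.prime hn₁)
  exact ⟨dvd_mul_right _ _, pow_two π ▸ mul_dvd_mul_left π hn₁⟩

end QuaternionOrder

theorem stmt_4_general (R F B : Type*) [CommRing R] [IsDomain R] [IsDiscreteValuationRing R]
    [Field F] [Algebra R F] [IsFractionRing R F]
    [Ring B] [Algebra F B] [Algebra R B] [IsScalarTower R F B]
    [IsSimpleRing B]
    (π : R) (hπ : Irreducible π)
    (trd : B →ₗ[F] F) (nrd : B → F)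
    (hchar : ∀ α : B, α ^ 2 - algebraMap F B (trd α) * α + algebraMap F B (nrd α) = 0)
    (htrd1 : trd 1 = 2)
    (O : Subalgebra R B) (hO : IsQuaternionOrder R F B O)
    (hloc : IsLocalRing O)
    (hnotbasic : ¬ IsBasicOrder R F B O)
    (α : O) (hα : α ∈ Ideal.jacobson (⊥ : Ideal O)) :
    (∃ s : R, nrd (α : B) = algebraMap R F (π ^ 2 * s)) ∧
    (α : B) ^ 2 ∈ (Ideal.span {π} : Ideal R) •
      ((Ideal.jacobson (⊥ : Ideal O)).restrictScalars R).map
        (Subalgebra.val O).toLinearMap := by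
  have : Module.Finite R O := hO.1
  have hint : IsIntegral R (α : B) := (Algebra.IsIntegral.isIntegral α).map O.val
  obtain ⟨t₁, s, hnrd, hrel⟩ : ∃ t₁ s : R, nrd α = algebraMap R F (π ^ 2 * s) ∧
      (α : B) ^ 2 - algebraMap R B (π * t₁) * α + algebraMap R B (π ^ 2 * s) = 0 := by
    by_cases hscalar : (α : B) ∈ Set.range (algebraMap F B)
    · exact exists_relation_of_mem_jacobson_of_mem_range hπ (nrd_algebraMap hchar htrd1) hα hint
        hscalar
    · obtain ⟨⟨t, ht⟩, ⟨n, hn⟩⟩ := exists_algebraMap_eq_of_quadratic hint hscalar (hchar α)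
      have hrel : (α : B) ^ 2 - algebraMap R B t * α + algebraMap R B n = 0 := by
        rw [IsScalarTower.algebraMap_apply R F B, IsScalarTower.algebraMap_apply R F B, ht, hn]
        exact hchar α
      obtain ⟨⟨t₁, rfl⟩, ⟨s, rfl⟩⟩ :=
        dvd_and_sq_dvd_of_not_isBasicOrder hπ hnotbasic hα hscalar hrel
      exact ⟨t₁, s, hn.symm, hrel⟩
  exact ⟨⟨s, hnrd⟩, sq_mem_span_smul_jacobson hα hrel⟩

/-- if `O` is a quaternion order over a DVR that is a local ring and is not
basic, then every `α ∈ rad O` satisfies `π² ∣ nrd α` and `α² ∈ p·(rad O)`. -/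
theorem stmt_4 (R F B : Type*) [CommRing R] [IsDomain R] [IsDiscreteValuationRing R]
    [Field F] [Algebra R F] [IsFractionRing R F]
    [Ring B] [Algebra F B] [Algebra R B] [IsScalarTower R F B]
    [Algebra.IsCentral F B] [IsSimpleRing B] (hB : Module.finrank F B = 4)
    (π : R) (hπ : Irreducible π)
    (trd : B →ₗ[F] F) (nrd : B → F)
    (hchar : ∀ α : B, α ^ 2 - algebraMap F B (trd α) * α + algebraMap F B (nrd α) = 0)
    (htrd1 : trd 1 = 2)
    (O : Subalgebra R B) (hO : IsQuaternionOrder R F B O)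
    (hloc : IsLocalRing O)
    (hnotbasic : ¬ IsBasicOrder R F B O)
    (α : O) (hα : α ∈ Ideal.jacobson (⊥ : Ideal O)) :
    (∃ s : R, nrd (α : B) = algebraMap R F (π ^ 2 * s)) ∧
    (α : B) ^ 2 ∈ (Ideal.span {π} : Ideal R) •
      ((Ideal.jacobson (⊥ : Ideal O)).restrictScalars R).map
        (Subalgebra.val O).toLinearMap :=
  stmt_4_general R F B π hπ trd nrd hchar htrd1 O hO hloc hnotbasic α hα
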